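/- Let p be a prime with p ≡ 1 (mod 4), and write p = a² + b² with a, b ∈ ℤ. In the Gaussian integers ℤ[i], set π = a + bi and π̄ = a − bi. Then π^{p−1} ≡ 1 (mod π̄²) in ℤ[i] if and only if (4ab)^{p−1} ≡ 1 (mod p²) in ℤ. -/
import Mathlib


open GaussianInt

lemma gauss_prime_of_norm_prime (z : GaussianInt) (h : Prime z.norm) : Prime z := by
  have : Irreducible z := by
    constructor
    · intro hu
      have h1 := Zsqrtd.norm_eq_one_iff.2 hu
      rw [Int.prime_iff_natAbs_prime, h1] at h
      exact Nat.not_prime_one h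
    · intro x y hxy
      have hn : z.norm = x.norm * y.norm := by rw [hxy, Zsqrtd.norm_mul]
      rcases h.irreducible.isUnit_or_isUnit hn with hd | hd
      · exact Or.inl (Zsqrtd.norm_eq_one_iff.1 (Int.isUnit_iff_natAbs_eq.1 hd))
      · exact Or.inr (Zsqrtd.norm_eq_one_iff.1 (Int.isUnit_iff_natAbs_eq.1 hd))
  exact this.prime

lemma gauss_dvd_norm_dvd {z w : GaussianInt} (h : z ∣ w) : z.norm ∣ w.norm := by
  obtain ⟨c, rfl⟩ := h
  rw [Zsqrtd.norm_mul]
  exact dvd_mul_right _ _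

lemma gauss_star_dvd {z w : GaussianInt} (h : z ∣ w) : star z ∣ star w := by
  obtain ⟨c, rfl⟩ := h
  exact ⟨star c, by rw [star_mul, mul_comm]⟩

lemma gauss_intCast_mk (n : ℤ) : ((n : GaussianInt)) = ⟨n, 0⟩ := by
  ext
  · exact Zsqrtd.re_intCast n
  · exact Zsqrtd.im_intCast n

/-- Let `p ≡ 1 (mod 4)` be a prime, written as `p = a² + b²`, and let `π = a + bi`,
`π̄ = a − bi` in the Gaussian integers.  Then `π^{p−1} ≡ 1 (mod π̄²)` in `ℤ[i]` if and
only if `(4ab)^{p−1} ≡ 1 (mod p²)` in `ℤ`. -/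
theorem gaussian_very_regular_criterion (p : ℕ) (hp : p.Prime) (hp4 : p % 4 = 1)
    (a b : ℤ) (hab : (p : ℤ) = a ^ 2 + b ^ 2) :
    ((⟨a, -b⟩ : GaussianInt) ^ 2 ∣ (⟨a, b⟩ : GaussianInt) ^ (p - 1) - 1) ↔
      ((p : ℤ) ^ 2 ∣ (4 * a * b) ^ (p - 1) - 1) := by
  set π : GaussianInt := ⟨a, b⟩ with hπ
  set π' : GaussianInt := ⟨a, -b⟩ with hπ'
  have hpint : Prime (p : ℤ) := Nat.prime_iff_prime_int.mp hp
  have hppos : (1 : ℤ) < p := by exact_mod_cast hp.one_lt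
  have hpodd : ¬ (p : ℤ) ∣ 2 := by
    intro h
    have h2 := Int.le_of_dvd (by norm_num) h
    have : p = 2 := by omega
    subst this; norm_num at hp4
  have hkeyab : ¬ ((p:ℤ) ∣ a ∧ (p:ℤ) ∣ b) := by
    rintro ⟨ha, hb⟩
    have h1 : (p:ℤ)^2 ∣ (p:ℤ) := by
      have := dvd_add (pow_dvd_pow_of_dvd ha 2) (pow_dvd_pow_of_dvd hb 2)
      rwa [← hab] at this
    have := Int.le_of_dvd (by omega) h1
    nlinarith
  have hpa : ¬ (p : ℤ) ∣ a := by
    intro h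
    refine hkeyab ⟨h, hpint.dvd_of_dvd_pow (n := 2) ?_⟩
    have hb2 : b^2 = (p:ℤ) - a^2 := by omega
    rw [hb2]
    exact dvd_sub dvd_rfl (dvd_pow h two_ne_zero)
  have hpb : ¬ (p : ℤ) ∣ b := by
    intro h
    refine hkeyab ⟨hpint.dvd_of_dvd_pow (n := 2) ?_, h⟩
    have ha2 : a^2 = (p:ℤ) - b^2 := by omega
    rw [ha2]
    exact dvd_sub dvd_rfl (dvd_pow h two_ne_zero)
  -- multiplicative structure
  have hmul : π' * π = ((p : ℤ) : GaussianInt) := by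
    rw [hπ, hπ', gauss_intCast_mk]
    ext <;> simp [hab] <;> ring
  have hnorm' : π'.norm = (p : ℤ) := by
    simp only [hπ', Zsqrtd.norm, hab]; ring
  have hprime' : Prime π' := gauss_prime_of_norm_prime _ (hnorm' ▸ hpint)
  -- π' does not divide π
  have hndvd : ¬ π' ∣ π := by
    intro h
    have h1 : π' ∣ ((2 * a : ℤ) : GaussianInt) := by
      have e : ((2 * a : ℤ) : GaussianInt) = π + π' := by
        rw [hπ, hπ', gauss_intCast_mk]
        ext <;> simp <;> ring
      rw [e]
      exact dvd_add h dvd_rfl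
    have h2 := gauss_dvd_norm_dvd h1
    rw [hnorm', Zsqrtd.norm_intCast] at h2
    have h3 : (p : ℤ) ∣ 2 * a := hpint.dvd_of_dvd_pow (n := 2) (by rw [sq]; exact h2)
    rcases hpint.dvd_mul.1 h3 with h4 | h4
    · exact hpodd h4
    · exact hpa h4
  -- the key identity π² - 4ab·i = π'²
  have hid : π ^ 2 - ((4 * a * b : ℤ) : GaussianInt) * ⟨0, 1⟩ = π' ^ 2 := by
    rw [hπ, hπ', gauss_intCast_mk]
    ext <;> simp [pow_two] <;> ring
  -- i^(p-1) = 1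
  have hi4 : (⟨0, 1⟩ : GaussianInt) ^ 4 = 1 := by
    ext <;> simp [pow_succ]
  have hipow : (⟨0, 1⟩ : GaussianInt) ^ (p - 1) = 1 := by
    obtain ⟨k, hk⟩ : 4 ∣ p - 1 := by omega
    rw [hk, pow_mul, hi4, one_pow]
  -- key congruence
  have hkey : π' ^ 2 ∣ (π ^ 2) ^ (p - 1) - (((4 * a * b) ^ (p - 1) : ℤ) : GaussianInt) := by
    have h1 : π' ^ 2 ∣ (π ^ 2) ^ (p - 1) - (((4 * a * b : ℤ) : GaussianInt) * ⟨0, 1⟩) ^ (p - 1) := by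
      rw [← hid]
      exact sub_dvd_pow_sub_pow _ _ _
    have h2 : (((4 * a * b : ℤ) : GaussianInt) * ⟨0, 1⟩) ^ (p - 1)
        = (((4 * a * b) ^ (p - 1) : ℤ) : GaussianInt) := by
      rw [mul_pow, hipow, mul_one, ← Int.cast_pow]
    rwa [h2] at h1
  -- Fermat: π' does not divide π^(p-1) + 1
  have hπp : π' ∣ ((p : ℤ) : GaussianInt) := ⟨π, hmul.symm⟩
  have hfermat : ¬ π' ∣ π ^ (p - 1) + 1 := by
    intro h
    have hbpi : π' ∣ ((b : ℤ) : GaussianInt) * π - ((2 * a * b : ℤ) : GaussianInt) := by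
      refine ⟨((-b : ℤ) : GaussianInt), ?_⟩
      rw [hπ, hπ', gauss_intCast_mk, gauss_intCast_mk, gauss_intCast_mk]
      ext <;> simp <;> ring
    have hpow : π' ∣ (((b : ℤ) : GaussianInt) * π) ^ (p - 1)
        - (((2 * a * b : ℤ) : GaussianInt)) ^ (p - 1) :=
      dvd_trans hbpi (sub_dvd_pow_sub_pow _ _ _)
    have c1 : π' ∣ (((b ^ (p - 1) : ℤ)) : GaussianInt) * π ^ (p - 1)
        - (((2 * a * b) ^ (p - 1) : ℤ) : GaussianInt) := by
      rw [Int.cast_pow, Int.cast_pow, ← mul_pow]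
      exact hpow
    have hcop1 : IsCoprime (2 * a * b : ℤ) (p : ℤ) := by
      rw [isCoprime_comm, hpint.coprime_iff_not_dvd]
      intro hd
      rcases hpint.dvd_mul.1 hd with h4 | h4
      · rcases hpint.dvd_mul.1 h4 with h5 | h5
        · exact hpodd h5
        · exact hpa h5
      · exact hpb h4
    have hcop2 : IsCoprime (b : ℤ) (p : ℤ) := by
      rw [isCoprime_comm, hpint.coprime_iff_not_dvd]; exact hpb
    have hf1 : (p : ℤ) ∣ (2 * a * b) ^ (p - 1) - 1 := by
      have hm := (Int.ModEq.pow_card_sub_one_eq_one hp hcop1).dvd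
      exact dvd_sub_comm.mp hm
    have hf2 : (p : ℤ) ∣ b ^ (p - 1) - 1 := by
      have hm := (Int.ModEq.pow_card_sub_one_eq_one hp hcop2).dvd
      exact dvd_sub_comm.mp hm
    have c2 : π' ∣ (((2 * a * b) ^ (p - 1) : ℤ) : GaussianInt) - 1 := by
      have := hπp.trans ((Zsqrtd.intCast_dvd_intCast _ _).mpr hf1)
      push_cast at this ⊢
      convert this using 1
    have c3 : π' ∣ (((b ^ (p - 1) : ℤ)) : GaussianInt) - 1 := by
      have := hπp.trans ((Zsqrtd.intCast_dvd_intCast _ _).mpr hf2)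
      push_cast at this ⊢
      convert this using 1
    have c4 : π' ∣ (((b ^ (p - 1) : ℤ)) : GaussianInt) * (π ^ (p - 1) + 1) :=
      h.mul_left _
    have h2' : π' ∣ (2 : GaussianInt) := by
      have hd := dvd_sub (dvd_sub (dvd_sub c4 c1) c2) c3
      have e : (((b ^ (p - 1) : ℤ)) : GaussianInt) * (π ^ (p - 1) + 1)
          - ((((b ^ (p - 1) : ℤ)) : GaussianInt) * π ^ (p - 1)
             - (((2 * a * b) ^ (p - 1) : ℤ) : GaussianInt))
          - ((((2 * a * b) ^ (p - 1) : ℤ) : GaussianInt) - 1)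
          - ((((b ^ (p - 1) : ℤ)) : GaussianInt) - 1) = 2 := by ring
      rwa [e] at hd
    have h5 := gauss_dvd_norm_dvd h2'
    rw [hnorm'] at h5
    have h6 : Zsqrtd.norm (2 : GaussianInt) = 2 * 2 := by
      rw [show (2 : GaussianInt) = ((2 : ℤ) : GaussianInt) by norm_cast, Zsqrtd.norm_intCast]
    rw [h6] at h5
    rcases hpint.dvd_mul.1 h5 with h7 | h7 <;> exact hpodd h7
  -- transfer of divisibility of integers
  have hstarπ' : star π' = π := by
    rw [hπ, hπ', Zsqrtd.star_mk, neg_neg]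
  have htrans : ∀ m : ℤ, π' ^ 2 ∣ (m : GaussianInt) → (p : ℤ) ^ 2 ∣ m := by
    intro m hm
    have hst := gauss_star_dvd hm
    rw [star_pow, hstarπ', star_intCast] at hst
    have hcop : IsCoprime (π' ^ 2) (π ^ 2) :=
      ((hprime'.coprime_iff_not_dvd.mpr hndvd)).pow
    have hboth := hcop.mul_dvd hm hst
    have e : π' ^ 2 * π ^ 2 = (((p : ℤ) ^ 2 : ℤ) : GaussianInt) := by
      rw [← mul_pow, hmul, ← Int.cast_pow]
    rw [e] at hboth
    exact (Zsqrtd.intCast_dvd_intCast _ _).mp hboth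
  have hp2eq : (((p : ℤ) ^ 2 : ℤ) : GaussianInt) = π' ^ 2 * π ^ 2 := by
    rw [← mul_pow, hmul, ← Int.cast_pow]
  constructor
  · intro h
    have hx : π ^ (p - 1) - 1 ∣ (π ^ (p - 1)) ^ 2 - 1 := by
      have := sub_dvd_pow_sub_pow (π ^ (p - 1)) 1 2
      simpa using this
    have h2 : π' ^ 2 ∣ (π ^ 2) ^ (p - 1) - 1 := by
      have := h.trans hx
      rwa [← pow_mul, mul_comm, pow_mul] at this
    have h4 := dvd_sub h2 hkey
    have e : ((π ^ 2) ^ (p - 1) - 1)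
        - ((π ^ 2) ^ (p - 1) - (((4 * a * b) ^ (p - 1) : ℤ) : GaussianInt))
        = (((4 * a * b) ^ (p - 1) - 1 : ℤ) : GaussianInt) := by
      push_cast
      ring
    rw [e] at h4
    exact htrans _ h4
  · intro h
    have h0 : π' ^ 2 ∣ (((4 * a * b) ^ (p - 1) - 1 : ℤ) : GaussianInt) := by
      refine dvd_trans ?_ ((Zsqrtd.intCast_dvd_intCast _ _).mpr h)
      rw [hp2eq]
      exact dvd_mul_right _ _
    have h1 : π' ^ 2 ∣ (π ^ (p - 1) - 1) * (π ^ (p - 1) + 1) := by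
      have e : (π ^ (p - 1) - 1) * (π ^ (p - 1) + 1)
          = ((π ^ 2) ^ (p - 1) - (((4 * a * b) ^ (p - 1) : ℤ) : GaussianInt))
            + (((4 * a * b) ^ (p - 1) - 1 : ℤ) : GaussianInt) := by
        rw [← pow_mul, mul_comm, pow_mul]
        push_cast
        ring
      rw [e]
      exact dvd_add hkey h0
    have hcop : IsCoprime (π' ^ 2) (π ^ (p - 1) + 1) :=
      (hprime'.coprime_iff_not_dvd.mpr hfermat).pow_left
    exact hcop.dvd_of_dvd_mul_right h1
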